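/- arXiv:1609.01979 — 2 statements merged into one kernel-verified Lean document; each statement's English description precedes it below -/
import Mathlib

section
/- Let S_2 = {z ∈ ℂ : 1 ≤ |z| ≤ 2}, T(z) = e^{2πi(|z|−1)} z, and conj(z) = z̄. Then for any integer k, the map T^k ∘ conj is an orientation-reversing continuous involution of S_2 that restricts to conj on the boundary ∂S_2. -/
open Complex

/-- The `k`-th power `T^k` of the Dehn twist `T z = e^{2πi(|z|-1)} z`. -/
noncomputable def dehnTwistPow (k : ℤ) (z : ℂ) : ℂ :=
  Complex.exp (2 * Real.pi * I * (k : ℂ) * (‖z‖ - 1)) * z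

/-- The annulus `S₂ = {z ∈ ℂ : 1 ≤ |z| ≤ 2}`. -/
def annulusS2 : Set ℂ := {z : ℂ | 1 ≤ ‖z‖ ∧ ‖z‖ ≤ 2}

/-!
Write `T^k z = e^{iθ(z)} z` with the radial angle `θ(z) = 2πk(|z| - 1)`. Then `T^k` preserves
`|z|`, so its powers compose additively and `conj ∘ T^k ∘ conj = T^{-k}`; hence
`(T^k ∘ conj)² = T^k ∘ T^{-k} = id`. On `|z| = 1, 2` the angle lies in `2πℤ`, so `T^k` fixes the
boundary. A map `z ↦ e^{iφ(z)} z` has Jacobian `1 + dφ(iz)`, and `dφ(iz) = 0` for radial `φ`;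
so `T^k` preserves orientation and `T^k ∘ conj` reverses it.
-/

open ComplexConjugate

theorem hasFDerivAt_norm_of_ne_zero {E : Type*} [NormedAddCommGroup E] [InnerProductSpace ℝ E]
    {x : E} (hx : x ≠ 0) : HasFDerivAt (‖·‖) (‖x‖⁻¹ • innerSL ℝ x) x := by
  have h := (Real.hasDerivAt_sqrt (pow_ne_zero 2 (norm_ne_zero_iff.2 hx))).comp_hasFDerivAt x
    (hasStrictFDerivAt_norm_sq x).hasFDerivAt
  simp only [Function.comp_def, Real.sqrt_sq (norm_nonneg _)] at h
  refine h.congr_fderiv ?_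
  ext v
  simp only [one_div, mul_inv_rev, smul_apply, coe_innerSL_apply, nsmul_eq_mul,
    Nat.cast_ofNat, smul_eq_mul]
  field_simp

theorem Complex.det_eq_im_conj_mul_apply (L : ℂ →ₗ[ℝ] ℂ) :
    LinearMap.det L = (conj (L 1) * L I).im := by
  rw [← LinearMap.det_toMatrix basisOneI, Matrix.det_fin_two]
  simp only [LinearMap.toMatrix_apply, coe_basisOneI, coe_basisOneI_repr, Matrix.cons_val_zero,
    Matrix.cons_val_one, Matrix.cons_val_fin_one, mul_im, conj_re, conj_im]
  ring

theorem det_fderiv_exp_mul_I_mul {φ : ℂ → ℝ} {φ' : ℂ →L[ℝ] ℝ} {z : ℂ}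
    (hφ : HasFDerivAt φ φ' z) :
    LinearMap.det (fderiv ℝ (fun w => exp (φ w * I) * w) z : ℂ →ₗ[ℝ] ℂ) = 1 + φ' (I * z) := by
  have h : HasFDerivAt (fun w => exp (φ w * I) * w) _ z :=
    ((hasDerivAt_exp _).comp_hasFDerivAt z
      ((ofRealCLM.hasFDerivAt.comp z hφ).mul_const I)).mul (hasFDerivAt_id z)
  have hIz : I * z = z.re • I - z.im • (1 : ℂ) := by
    apply Complex.ext <;> simp
  rw [h.fderiv, Complex.det_eq_im_conj_mul_apply, hIz, map_sub, map_smul, map_smul]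
  simp only [Function.comp_apply, ofRealCLM_apply, ContinuousLinearMap.toLinearMap_add,
    ContinuousLinearMap.toLinearMap_smul, ContinuousLinearMap.coe_id,
    ContinuousLinearMap.toLinearMap_comp, ofRealCLM_coe, LinearMap.add_apply, LinearMap.smul_apply,
    LinearMap.id_coe, id_eq, smul_eq_mul, mul_one, LinearMap.coe_comp, AlgHom.coe_toLinearMap,
    ofRealAm_coe, ContinuousLinearMap.coe_coe, map_add, map_mul, conj_I, conj_ofReal, neg_mul,
    mul_neg, mul_im, add_re, conj_re, exp_ofReal_mul_I_re, neg_re, mul_re, I_re, ofReal_re,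
    zero_mul, I_im, ofReal_im, mul_zero, sub_self, conj_im, exp_ofReal_mul_I_im, one_mul, zero_add,
    sub_neg_eq_add, add_zero, neg_add_rev, add_im, zero_sub, neg_im, neg_neg]
  linear_combination (1 + z.re * φ' I - z.im * φ' 1) * Real.sin_sq_add_cos_sq (φ z)

theorem dehnTwistPow_eq_exp_mul_I (k : ℤ) (z : ℂ) :
    dehnTwistPow k z = exp ((2 * Real.pi * k * (‖z‖ - 1) : ℝ) * I) * z := by
  rw [dehnTwistPow]
  push_cast
  ring_nf

theorem norm_dehnTwistPow (k : ℤ) (z : ℂ) : ‖dehnTwistPow k z‖ = ‖z‖ := by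
  rw [dehnTwistPow_eq_exp_mul_I, norm_mul, norm_exp_ofReal_mul_I, one_mul]

@[simp]
theorem dehnTwistPow_zero (z : ℂ) : dehnTwistPow 0 z = z := by
  simp [dehnTwistPow]

theorem dehnTwistPow_dehnTwistPow (k m : ℤ) (z : ℂ) :
    dehnTwistPow k (dehnTwistPow m z) = dehnTwistPow (k + m) z := by
  rw [dehnTwistPow, norm_dehnTwistPow, dehnTwistPow, dehnTwistPow, ← mul_assoc, ← exp_add]
  push_cast
  ring_nf

theorem conj_dehnTwistPow (k : ℤ) (z : ℂ) :
    conj (dehnTwistPow k z) = dehnTwistPow (-k) (conj z) := by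
  rw [dehnTwistPow_eq_exp_mul_I, dehnTwistPow_eq_exp_mul_I, norm_conj, map_mul, ← exp_conj,
    map_mul, conj_ofReal, conj_I]
  push_cast
  ring_nf

theorem dehnTwistPow_of_norm_eq_intCast_add_one (k n : ℤ) {z : ℂ} (h : ‖z‖ = n + 1) :
    dehnTwistPow k z = z := by
  rw [dehnTwistPow, h]
  convert one_mul z
  convert exp_int_mul_two_pi_mul_I (k * n) using 2
  push_cast
  ring

theorem continuous_dehnTwistPow (k : ℤ) : Continuous (dehnTwistPow k) := by
  unfold dehnTwistPow
  fun_prop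

theorem hasFDerivAt_dehnTwistPow_angle (k : ℤ) {z : ℂ} (hz : z ≠ 0) :
    HasFDerivAt (fun w : ℂ => 2 * Real.pi * k * (‖w‖ - 1))
      ((2 * Real.pi * k) • ‖z‖⁻¹ • innerSL ℝ z) z :=
  ((hasFDerivAt_norm_of_ne_zero hz).sub_const 1).const_mul _

theorem differentiableAt_dehnTwistPow (k : ℤ) {z : ℂ} (hz : z ≠ 0) :
    DifferentiableAt ℝ (dehnTwistPow k) z := by
  rw [funext (dehnTwistPow_eq_exp_mul_I k)]
  exact ((ofRealCLM.differentiableAt.comp z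
    (hasFDerivAt_dehnTwistPow_angle k hz).differentiableAt).mul_const I).cexp.mul
    differentiableAt_id

theorem det_fderiv_dehnTwistPow (k : ℤ) {z : ℂ} (hz : z ≠ 0) :
    LinearMap.det (fderiv ℝ (dehnTwistPow k) z : ℂ →ₗ[ℝ] ℂ) = 1 := by
  rw [funext (dehnTwistPow_eq_exp_mul_I k),
    det_fderiv_exp_mul_I_mul (hasFDerivAt_dehnTwistPow_angle k hz)]
  have horth : inner ℝ z (I * z) = 0 := by
    rw [Complex.inner, mul_assoc, mul_conj]
    simp
  simp [horth]

theorem det_fderiv_dehnTwistPow_comp_conj (k : ℤ) {z : ℂ} (hz : z ≠ 0) :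
    LinearMap.det (fderiv ℝ (fun w => dehnTwistPow k (conj w)) z : ℂ →ₗ[ℝ] ℂ) = -1 := by
  have hconj : conj z ≠ 0 := by simpa using hz
  have h : HasFDerivAt (fun w => dehnTwistPow k (conj w)) _ z :=
    (differentiableAt_dehnTwistPow k hconj).hasFDerivAt.comp z conjCLE.hasFDerivAt
  rw [h.fderiv, ContinuousLinearMap.toLinearMap_comp, LinearMap.det_comp,
    det_fderiv_dehnTwistPow k hconj, one_mul]
  exact det_conjAe

/-- For any integer `k`, the map `T^k ∘ conj` is an orientation-reversing continuous
involution of the annulus `S₂` restricting to complex conjugation on the boundary. -/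
theorem dehnTwistPow_comp_conj_involution (k : ℤ) :
    Set.MapsTo (fun z => dehnTwistPow k ((starRingEnd ℂ) z)) annulusS2 annulusS2 ∧
    ContinuousOn (fun z => dehnTwistPow k ((starRingEnd ℂ) z)) annulusS2 ∧
    (∀ z ∈ annulusS2,
      dehnTwistPow k ((starRingEnd ℂ) (dehnTwistPow k ((starRingEnd ℂ) z))) = z) ∧
    (∀ z ∈ annulusS2,
      LinearMap.det
        ((fderiv ℝ (fun z => dehnTwistPow k ((starRingEnd ℂ) z)) z).toLinearMap) < 0) ∧
    (∀ z : ℂ, ‖z‖ = 1 ∨ ‖z‖ = 2 →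
      dehnTwistPow k ((starRingEnd ℂ) z) = (starRingEnd ℂ) z) := by
  refine ⟨fun z hz => ?_, ?_, fun z _ => ?_, fun z hz => ?_, fun z hz => ?_⟩
  · simpa [annulusS2, norm_dehnTwistPow] using hz
  · exact ((continuous_dehnTwistPow k).comp continuous_conj).continuousOn
  · rw [conj_dehnTwistPow, conj_conj, dehnTwistPow_dehnTwistPow, add_neg_cancel, dehnTwistPow_zero]
  · have hz0 : z ≠ 0 := norm_pos_iff.1 (one_pos.trans_le hz.1)
    rw [det_fderiv_dehnTwistPow_comp_conj k hz0]
    norm_num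
  · have hconj : ‖conj z‖ = (0 : ℤ) + 1 ∨ ‖conj z‖ = (1 : ℤ) + 1 := by
      rw [norm_conj]; norm_num [hz]
    exact hconj.elim (dehnTwistPow_of_norm_eq_intCast_add_one k 0)
      (dehnTwistPow_of_norm_eq_intCast_add_one k 1)
end

section
/- Let Γ be a finite connected graph, e an edge of Γ, and suppose that for every edge e' (including e' = e in the degenerate sense), the graph Γ \ {e} is connected and Γ \ {e, e'} is connected for all non-bridge edges e'. Then there exist two cycles c₁ and c₂ in the cycle space of Γ whose edge-intersection is exactly {e}. -/
/-- An element of the cycle space of `G` over `ℤ/2ℤ`: a set of edges of `G` in which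
every vertex has even degree. -/
def SimpleGraph.IsCycleSpaceElement {V : Type*} [DecidableEq V] (G : SimpleGraph V)
    (c : Finset (Sym2 V)) : Prop :=
  ↑c ⊆ G.edgeSet ∧ ∀ v : V, Even (c.filter (fun f => v ∈ f)).card

/-!
Put `e = s(u, v)`. No edge `f` of `Γ - e` separates `u` from `v`: otherwise `f` lies on every
`u`–`v` path of `Γ - e`, hence on a cycle through `e`, so `Γ - f` is connected and then so is
`Γ - {e, f}`. By the two-path edge version of Menger's theorem, `Γ - e` therefore has two
edge-disjoint `u`–`v` trails, and closing each of them with `e` gives the two cycle-space elements.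

Menger's theorem is proved along a `u`–`v` path, as in Whitney's proof: given edge-disjoint trails
`p, q` from `u` to `w` and an edge `wx` such that `x` is still reachable from `u` without `wx`,
either `x` lies on one of them, say `p`, and we cut `p` at `x` and send `q` back along the cut-off
end of `p`, or we take a `u`–`x` walk avoiding `wx`, splice its part after its last vertex on `p`
or `q` onto that trail, and extend the other trail by `wx`.
-/

namespace SimpleGraph

variable {V : Type*} {G : SimpleGraph V} {u v w x y : V}

def HasTwoEdgeDisjointTrails (G : SimpleGraph V) (u v : V) : Prop :=
  ∃ p q : G.Walk u v, p.IsTrail ∧ q.IsTrail ∧ p.edges.Disjoint q.edges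

namespace Walk

lemma exists_isSubwalk_forall_mem_support_tail_notMem (S : Set V) (r : G.Walk u v)
    (h : ∃ z ∈ r.support, z ∈ S) :
    ∃ y ∈ S, ∃ r' : G.Walk y v, r'.IsSubwalk r ∧ ∀ z ∈ r'.support.tail, z ∉ S := by
  induction r with
  | nil =>
    obtain ⟨z, hz, hzS⟩ := h
    rw [support_nil, List.mem_singleton] at hz
    exact ⟨_, hz ▸ hzS, nil, isSubwalk_rfl _, by simp⟩
  | cons hadj r ih =>
    by_cases hr : ∃ z ∈ r.support, z ∈ S
    · obtain ⟨y, hy, r', hsub, htail⟩ := ih hr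
      exact ⟨y, hy, r', hsub.cons hadj, htail⟩
    · simp only [not_exists, not_and] at hr
      obtain ⟨z, hz, hzS⟩ := h
      rw [support_cons, List.mem_cons] at hz
      rcases hz with rfl | hz
      · exact ⟨z, hzS, cons hadj r, isSubwalk_rfl _, by simpa using hr⟩
      · exact absurd hzS (hr z hz)

lemma disjoint_edges_of_forall_mem_support_tail_notMem (r : G.Walk y x) (p : G.Walk u v)
    (h : ∀ z ∈ r.support.tail, z ∉ p.support) : r.edges.Disjoint p.edges := by
  intro g hgr hgp
  obtain ⟨d, hd, rfl⟩ := List.mem_map.mp hgr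
  have hsnd : d.snd ∈ r.support.tail := by
    rw [← map_snd_darts]
    exact List.mem_map_of_mem hd
  exact h _ hsnd (p.snd_mem_support_of_mem_edges hgp)

end Walk

open Walk

lemma hasTwoEdgeDisjointTrails_of_mem_support {p q : G.Walk u w} (hp : p.IsTrail)
    (hq : q.IsTrail) (hpq : p.edges.Disjoint q.edges) (hx : x ∈ p.support) :
    G.HasTwoEdgeDisjointTrails u x := by
  classical
  have htake := p.edges_takeUntil_subset_edges hx
  have hdrop := p.edges_dropUntil_subset_edges hx
  have hsplit := hp.disjoint_edges_takeUntil_dropUntil hx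
  refine ⟨p.takeUntil x hx, q.append (p.dropUntil x hx).reverse, hp.takeUntil hx, ?_, ?_⟩
  · rw [isTrail_append, edges_reverse, List.disjoint_reverse_right]
    exact ⟨hq, (hp.dropUntil hx).reverse, fun g hgq hgd => hpq (hdrop hgd) hgq⟩
  · rw [edges_append, edges_reverse, List.disjoint_append_right, List.disjoint_reverse_right]
    exact ⟨fun g hgt hgq => hpq (htake hgt) hgq, hsplit⟩

lemma hasTwoEdgeDisjointTrails_of_detour {p q : G.Walk u w} (hp : p.IsTrail) (hq : q.IsTrail)
    (hpq : p.edges.Disjoint q.edges) (hwx : G.Adj w x) (hxp : x ∉ p.support)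
    (hxq : x ∉ q.support) (hy : y ∈ p.support) {r : G.Walk y x} (hr : r.IsTrail)
    (hrp : r.edges.Disjoint p.edges) (hrq : r.edges.Disjoint q.edges)
    (hwxr : s(w, x) ∉ r.edges) : G.HasTwoEdgeDisjointTrails u x := by
  classical
  have htake := p.edges_takeUntil_subset_edges hy
  have hwxp : s(w, x) ∉ p.edges := fun h => hxp (p.snd_mem_support_of_mem_edges h)
  have hwxq : s(w, x) ∉ q.edges := fun h => hxq (q.snd_mem_support_of_mem_edges h)
  refine ⟨(p.takeUntil y hy).append r, q.concat hwx, ?_, ?_, ?_⟩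
  · rw [isTrail_append]
    exact ⟨hp.takeUntil hy, hr, fun g hgt hgr => hrp hgr (htake hgt)⟩
  · rw [concat_eq_append, isTrail_append]
    exact ⟨hq, by simp, by simpa using hwxq⟩
  · rw [edges_append, edges_concat, List.concat_eq_append]
    simp only [List.disjoint_append_left, List.disjoint_append_right, List.disjoint_singleton]
    refine ⟨⟨fun g hgt hgq => hpq (htake hgt) hgq, hrq⟩, ?_⟩
    rw [List.mem_append, not_or]
    exact ⟨fun h => hwxp (htake h), hwxr⟩

lemma HasTwoEdgeDisjointTrails.extend (h : G.HasTwoEdgeDisjointTrails u w) (hwx : G.Adj w x)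
    (hux : (G.deleteEdges {s(w, x)}).Reachable u x) : G.HasTwoEdgeDisjointTrails u x := by
  classical
  obtain ⟨p, q, hp, hq, hpq⟩ := h
  by_cases hxp : x ∈ p.support
  · exact hasTwoEdgeDisjointTrails_of_mem_support hp hq hpq hxp
  by_cases hxq : x ∈ q.support
  · exact hasTwoEdgeDisjointTrails_of_mem_support hq hp hpq.symm hxq
  obtain ⟨r, hr⟩ := reachable_deleteEdges_iff_exists_walk.mp hux
  obtain ⟨y, hy, r', hsub, htail⟩ := r.exists_isSubwalk_forall_mem_support_tail_notMem
    {z | z ∈ p.support ∨ z ∈ q.support} ⟨u, r.start_mem_support, Or.inl p.start_mem_support⟩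
  have hrp : r'.bypass.edges.Disjoint p.edges := fun g hg =>
    r'.disjoint_edges_of_forall_mem_support_tail_notMem p (fun z hz h => htail z hz (Or.inl h))
      (r'.edges_bypass_subset_edges hg)
  have hrq : r'.bypass.edges.Disjoint q.edges := fun g hg =>
    r'.disjoint_edges_of_forall_mem_support_tail_notMem q (fun z hz h => htail z hz (Or.inr h))
      (r'.edges_bypass_subset_edges hg)
  have hwxr : s(w, x) ∉ r'.bypass.edges := fun h =>
    hr (hsub.edges_subset (r'.edges_bypass_subset_edges h))
  rcases hy with hy | hy
  · exact hasTwoEdgeDisjointTrails_of_detour hp hq hpq hwx hxp hxq hy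
      r'.bypass_isPath.isTrail hrp hrq hwxr
  · exact hasTwoEdgeDisjointTrails_of_detour hq hp hpq.symm hwx hxq hxp hy
      r'.bypass_isPath.isTrail hrq hrp hwxr

lemma hasTwoEdgeDisjointTrails_of_forall_mem_support (W : G.Walk x u)
    (h : ∀ y ∈ W.support, G.IsEdgeReachable 2 u y) : G.HasTwoEdgeDisjointTrails u x := by
  induction W with
  | nil => exact ⟨nil, nil, by simp, by simp, by simp⟩
  | cons hadj W ih =>
    refine (ih fun y hy => h y (by simp [hy])).extend hadj.symm ?_
    exact isEdgeReachable_two.mp (h _ (start_mem_support _)) _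

theorem IsEdgeReachable.hasTwoEdgeDisjointTrails (h : G.IsEdgeReachable 2 u v) :
    G.HasTwoEdgeDisjointTrails u v := by
  obtain ⟨p, hp⟩ := (h.reachable two_ne_zero).exists_isPath
  refine hasTwoEdgeDisjointTrails_of_forall_mem_support p.reverse fun y hy => ?_
  rw [support_reverse, List.mem_reverse] at hy
  exact hp.isTrail.isEdgeReachable_two_of_isEdgeReachable_two h p.start_mem_support hy

lemma Walk.IsTrail.isCycleSpaceElement [DecidableEq V] {c : G.Walk u u} (hc : c.IsTrail) :
    G.IsCycleSpaceElement c.edges.toFinset := by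
  refine ⟨fun g hg => c.edges_subset_edgeSet (List.mem_toFinset.mp hg), fun x => ?_⟩
  rw [hc.edges_nodup.card_eq_countP]
  exact (hc.even_countP_edges_iff x).mpr fun h => absurd rfl h

theorem exists_isCycleSpaceElement_inter_eq_singleton [DecidableEq V] (huv : G.Adj u v)
    (h : (G.deleteEdges {s(u, v)}).IsEdgeReachable 2 u v) :
    ∃ c₁ c₂ : Finset (Sym2 V), G.IsCycleSpaceElement c₁ ∧ G.IsCycleSpaceElement c₂ ∧
      c₁ ∩ c₂ = {s(u, v)} := by
  obtain ⟨p, q, hp, hq, hpq⟩ := h.hasTwoEdgeDisjointTrails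
  have hclose : ∀ r : (G.deleteEdges {s(u, v)}).Walk u v, r.IsTrail →
      G.IsCycleSpaceElement (insert s(u, v) r.edges.toFinset) := by
    intro r hr
    have hvu : s(v, u) ∉ r.edges := fun hmem => by
      simpa [Sym2.eq_swap] using r.edges_subset_edgeSet hmem
    have hclosed : (cons huv.symm (r.mapLe (G.deleteEdges_le _))).IsTrail := by
      rw [isTrail_cons, edges_mapLe_eq_edges, isTrail_mapLe]
      exact ⟨hr, hvu⟩
    simpa [edges_mapLe_eq_edges, Sym2.eq_swap] using hclosed.isCycleSpaceElement
  refine ⟨_, _, hclose p hp, hclose q hq, ?_⟩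
  have hdisj : p.edges.toFinset ∩ q.edges.toFinset = ∅ :=
    Finset.disjoint_iff_inter_eq_empty.mp (List.disjoint_toFinset_iff_disjoint.mpr hpq)
  rw [← Finset.insert_inter_distrib, hdisj, insert_empty_eq]

theorem isEdgeReachable_two_deleteEdges_of_forall_connected (huv : G.Adj u v)
    (hbre : (G.deleteEdges {s(u, v)}).Connected)
    (hpairs : ∀ f ∈ G.edgeSet, f ≠ s(u, v) → (G.deleteEdges {f}).Connected →
      (G.deleteEdges {s(u, v), f}).Connected) :
    (G.deleteEdges {s(u, v)}).IsEdgeReachable 2 u v := by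
  refine isEdgeReachable_two.mpr fun f => ?_
  by_contra hsep
  obtain ⟨p, hp⟩ := (hbre.preconnected u v).exists_isPath
  have hfp : f ∈ p.edges := p.mem_edges_of_not_reachable_deleteEdges hsep
  have hf : f ∈ G.edgeSet ∧ f ≠ s(u, v) := by
    simpa using p.edges_subset_edgeSet hfp
  have hcycle : (cons huv.symm (p.mapLe (G.deleteEdges_le _))).IsCycle := by
    rw [cons_isCycle_iff, edges_mapLe_eq_edges, isPath_mapLe]
    exact ⟨hp, fun hmem => by simpa [Sym2.eq_swap] using p.edges_subset_edgeSet hmem⟩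
  have hGf : (G.deleteEdges {f}).Connected := by
    cases f with | h a b =>
    refine (hbre.mono (G.deleteEdges_le _)).connected_delete_edge_of_not_isBridge fun hb => ?_
    exact hb.notMem_edges_of_isCycle hcycle (by
      rw [edges_cons, edges_mapLe_eq_edges]; exact List.mem_cons_of_mem _ hfp)
  apply hsep
  rw [deleteEdges_deleteEdges, Set.singleton_union]
  exact (hpairs f hf.1 hf.2 hGf).preconnected u v

end SimpleGraph

theorem exists_two_cycles_meeting_in_edge_general
    {V : Type*} [DecidableEq V] (G : SimpleGraph V)
    (e : Sym2 V) (he : e ∈ G.edgeSet)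
    (hbre : (G.deleteEdges {e}).Connected)
    (hpairs : ∀ e' ∈ G.edgeSet, e' ≠ e → (G.deleteEdges {e'}).Connected →
      (G.deleteEdges {e, e'}).Connected) :
    ∃ c₁ c₂ : Finset (Sym2 V), G.IsCycleSpaceElement c₁ ∧ G.IsCycleSpaceElement c₂ ∧
      c₁ ∩ c₂ = {e} := by
  cases e with | h u v =>
  exact G.exists_isCycleSpaceElement_inter_eq_singleton he
    (G.isEdgeReachable_two_deleteEdges_of_forall_connected he hbre hpairs)

/-- If `e` is an edge of a finite connected graph `Γ` such that `Γ \ {e}` is connected and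
`Γ \ {e, e'}` is connected for every non-bridge edge `e' ≠ e`, then there exist two
elements of the cycle space whose intersection is exactly `{e}`. -/
theorem exists_two_cycles_meeting_in_edge
    {V : Type*} [Fintype V] [DecidableEq V] (G : SimpleGraph V) (hconn : G.Connected)
    (e : Sym2 V) (he : e ∈ G.edgeSet)
    (hbre : (G.deleteEdges {e}).Connected)
    (hpairs : ∀ e' ∈ G.edgeSet, e' ≠ e → (G.deleteEdges {e'}).Connected →
      (G.deleteEdges {e, e'}).Connected) :
    ∃ c₁ c₂ : Finset (Sym2 V), G.IsCycleSpaceElement c₁ ∧ G.IsCycleSpaceElement c₂ ∧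
      c₁ ∩ c₂ = {e} :=
  exists_two_cycles_meeting_in_edge_general G e he hbre hpairs
end
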